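/- In the execution of Algorithm lineon on any request sequence R, every arc a ∈ A^T of Triangle's solution belongs to arcbin(I,i) for at most 3 bins (I,i) ∈ BIN; consequently Σ_{(I,i)∈BIN} |arcbin(I,i)| ≤ 3·|A^T|. -/

import Mathlib

open Finset

/-! ## The time-line grid of a line network -/

/-- Grid edges of the time-line graph of the line network:
`h v t` is the undirected horizontal edge `{(v,t),(v+1,t)}`,
`a v t` is the arc `((v,t),(v,t+1))` directed forward in time. -/
inductive GEdge : Type
  | h (v t : ℕ) : GEdge
  | a (v t : ℕ) : GEdge
deriving DecidableEq

/-- Distance between two nodes of the line network. -/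
def natdist (a b : ℕ) : ℕ := max a b - min a b

/-- The (replica) endpoints of a grid edge. -/
def eVerts : GEdge → Finset (ℕ × ℕ)
  | .h v t => {(v, t), (v + 1, t)}
  | .a v t => {(v, t), (v, t + 1)}

/-- The replicas that are endpoints of edges of `F`. -/
def verts (F : Finset GEdge) : Finset (ℕ × ℕ) := F.biUnion eVerts

/-- The edge lies inside the grid of the line network `L(n)` (nodes `1,…,n`). -/
def eInGrid (n : ℕ) : GEdge → Prop
  | .h v _ => 1 ≤ v ∧ v + 1 ≤ n
  | .a v _ => 1 ≤ v ∧ v ≤ n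

/-- The distance `d((u,s),(v,t)) = (t-s) + |v-u|` if `s ≤ t`, and `∞` otherwise. -/
def gdist (p q : ℕ × ℕ) : WithTop ℕ :=
  if p.2 ≤ q.2 then ((q.2 - p.2 + natdist p.1 q.1 : ℕ) : WithTop ℕ) else ⊤

/-- One step of a path in a solution: horizontal edges may be traversed in both
directions, arcs only forward in time. -/
inductive GStep (F : Finset GEdge) : ℕ × ℕ → ℕ × ℕ → Prop
  | right {v t : ℕ} : GEdge.h v t ∈ F → GStep F (v, t) (v + 1, t)
  | left {v t : ℕ} : GEdge.h v t ∈ F → GStep F (v + 1, t) (v, t)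
  | up {v t : ℕ} : GEdge.a v t ∈ F → GStep F (v, t) (v, t + 1)

/-- `q` is reachable from `p` in the edge set `F`. -/
def Reaches (F : Finset GEdge) (p q : ℕ × ℕ) : Prop := Relation.ReflTransGen (GStep F) p q

/-- A feasible MCD solution: a set of grid edges spanning all requests from the
origin replica `(r0, 0)`. -/
def Feasible (n r0 : ℕ) (R : List (ℕ × ℕ)) (F : Finset GEdge) : Prop :=
  (∀ e ∈ F, eInGrid n e) ∧ ∀ r ∈ R, Reaches F (r0, 0) r

/-- `|OPT|`, the cost of a minimum-cost feasible solution. -/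
noncomputable def optCost (n r0 : ℕ) (R : List (ℕ × ℕ)) : ℕ :=
  sInf {c : ℕ | ∃ F : Finset GEdge, Feasible n r0 R F ∧ F.card = c}

/-- A valid MCD instance on `L(n)`: the origin and all requested nodes are in
`{1,…,n}` and the request times are nondecreasing. -/
def ValidInstance (n r0 : ℕ) (R : List (ℕ × ℕ)) : Prop :=
  1 ≤ r0 ∧ r0 ≤ n ∧ (∀ r ∈ R, 1 ≤ r.1 ∧ r.1 ≤ n) ∧ List.Chain' (· ≤ ·) (R.map Prod.snd)

/-- The time `t_N` of the last request. -/
def lastT (R : List (ℕ × ℕ)) : ℕ := (R.map Prod.snd).foldr max 0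

/-! ## The offline algorithm Triangle of Charikar, Halperin and Motwani -/

/-- The `i`-th request (junk value `(0,0)` out of range). -/
def req (R : List (ℕ × ℕ)) (i : ℕ) : ℕ × ℕ := R.getD i (0, 0)

/-- The radius `ρ^T_i = d(q_i, r_i)` of the `i`-th request, where `q_i = serve i`
is its serving replica. -/
def triRho (R : List (ℕ × ℕ)) (serve : ℕ → ℕ × ℕ) (i : ℕ) : ℕ :=
  ((req R i).2 - (serve i).2) + natdist (serve i).1 (req R i).1

/-- `Base(i)`: the replicas `(v, t_i)` with `|v - v_i| ≤ ρ^T_i`. -/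
def triBase (n : ℕ) (R : List (ℕ × ℕ)) (serve : ℕ → ℕ × ℕ) (i : ℕ) : Finset (ℕ × ℕ) :=
  ((Finset.Icc 1 n).filter fun v => natdist v (req R i).1 ≤ triRho R serve i).image
    fun v => (v, (req R i).2)

/-- `Base_H(i)`: the horizontal edges joining consecutive replicas of `Base(i)`. -/
def triBaseH (n : ℕ) (R : List (ℕ × ℕ)) (serve : ℕ → ℕ × ℕ) (i : ℕ) : Finset GEdge :=
  ((Finset.Icc 1 n).filter fun v =>
      v + 1 ≤ n ∧ natdist v (req R i).1 ≤ triRho R serve i ∧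
        natdist (v + 1) (req R i).1 ≤ triRho R serve i).image
    fun v => GEdge.h v (req R i).2

/-- The arcs of the vertical path from the serving replica `(u_i, s_i)` to `(u_i, t_i)`
added at step (T3). -/
def triAddA (R : List (ℕ × ℕ)) (serve : ℕ → ℕ × ℕ) (i : ℕ) : Finset GEdge :=
  (Finset.Ico (serve i).2 (req R i).2).image fun τ => GEdge.a (serve i).1 τ

/-- Triangle's solution after handling the first `i` requests. -/
def triSol (R : List (ℕ × ℕ)) (serve : ℕ → ℕ × ℕ) (addH : ℕ → Finset GEdge)
    (i : ℕ) : Finset GEdge :=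
  (Finset.range i).biUnion fun j => triAddA R serve j ∪ addH j

/-- The replicas of Triangle's solution after handling the first `i` requests
(initially only the origin replica `(r0,0)`). -/
def triReps (r0 : ℕ) (R : List (ℕ × ℕ)) (serve : ℕ → ℕ × ℕ) (addH : ℕ → Finset GEdge)
    (i : ℕ) : Finset (ℕ × ℕ) :=
  insert (r0, 0) (verts (triSol R serve addH i))

/-- An execution of Algorithm Triangle on the instance `(n, r0, R)`:
`serve i` is the serving replica `q_i = (u_i, s_i)` of request `r_i` (step (T1)),
chosen in the current solution at minimum distance from `r_i`;
`addH i` is the set of horizontal edges added at step (T4), namely all of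
`Base_H(i)` except possibly one edge (the one closing a cycle). -/
structure TriangleExec (n r0 : ℕ) (R : List (ℕ × ℕ)) where
  serve : ℕ → ℕ × ℕ
  addH : ℕ → Finset GEdge
  serve_mem : ∀ i < R.length, serve i ∈ triReps r0 R serve addH i
  serve_time : ∀ i < R.length, (serve i).2 ≤ (req R i).2
  serve_min : ∀ i < R.length, ∀ q ∈ triReps r0 R serve addH i,
      gdist (serve i) (req R i) ≤ gdist q (req R i)
  addH_spec : ∀ i < R.length, ∃ E : Finset GEdge,
      E.card ≤ 1 ∧ addH i = triBaseH n R serve i \ E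
  base_conn : ∀ i < R.length, ∀ p ∈ triBase n R serve i,
      Reaches (triSol R serve addH (i + 1)) (r0, 0) p
  addH_tail : ∀ i, R.length ≤ i → addH i = ∅

/-- `H^T`: the horizontal edges of Triangle's final solution. -/
def triHT (R : List (ℕ × ℕ)) (addH : ℕ → Finset GEdge) : Finset GEdge :=
  (Finset.range R.length).biUnion addH

/-- `A^T`: the arcs of Triangle's final solution. -/
def triAT (R : List (ℕ × ℕ)) (serve : ℕ → ℕ × ℕ) : Finset GEdge :=
  (Finset.range R.length).biUnion (triAddA R serve)

/-- `Base = ∪ᵢ Base(i)`: all base replicas. -/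
def triBaseAll (n : ℕ) (R : List (ℕ × ℕ)) (serve : ℕ → ℕ × ℕ) : Finset (ℕ × ℕ) :=
  (Finset.range R.length).biUnion (triBase n R serve)

/-! ## Algorithm lineon -/

/-- An interval of the hierarchical partition, encoded as `(level, index)`:
`(l, j)` denotes `I^l_j = {Δ(j-1)·2^l + 1, …, Δ·j·2^l}`. -/
abbrev Ivl := ℕ × ℕ

/-- The nodes of the interval `I = (l, j)`. -/
def ivlNodes (Δ : ℕ) (I : Ivl) : Finset ℕ :=
  Finset.Icc (Δ * (I.2 - 1) * 2 ^ I.1 + 1) (Δ * I.2 * 2 ^ I.1)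

/-- `I = (l, j)` is a genuine interval of the partition of `{1,…,n}`,
where `n = Δ · 2^k`: its level is at most `log₂ m = k` and
`1 ≤ j ≤ m / 2^l = 2^(k-l)`. -/
def validIvl (Δ k : ℕ) (I : Ivl) : Prop :=
  I.1 ≤ k ∧ 1 ≤ I.2 ∧ I.2 ≤ 2 ^ (k - I.1)

/-- The nodes of the neighborhood `N(I) = NL(I) ∪ I ∪ NR(I)` of interval `I`. -/
def nbhdNodes (n Δ : ℕ) (I : Ivl) : Finset ℕ :=
  Finset.Icc (Δ * (I.2 - 2) * 2 ^ I.1 + 1) (min n (Δ * (I.2 + 1) * 2 ^ I.1))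

/-- The nodes having a base replica at time `t` (`Base[t]`, as nodes). -/
def baseNodesAt (n : ℕ) (R : List (ℕ × ℕ)) (serve : ℕ → ℕ × ℕ) (t : ℕ) : Finset ℕ :=
  ((triBaseAll n R serve).filter fun p => p.2 = t).image Prod.fst

/-- `I` is active at time `t`: `Base ∩ I[t - 2^{l(I)}, t] ≠ ∅`. -/
def activeAt (n Δ : ℕ) (R : List (ℕ × ℕ)) (serve : ℕ → ℕ × ℕ) (I : Ivl) (t : ℕ) : Prop :=
  ∃ p ∈ triBaseAll n R serve, p.1 ∈ ivlNodes Δ I ∧ p.2 ≤ t ∧ t ≤ p.2 + 2 ^ I.1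

/-- `I` is stay-active at time `t`: `Base ∩ I[t - 2^{l(I)} + 1, t] ≠ ∅`. -/
def stayActiveAt (n Δ : ℕ) (R : List (ℕ × ℕ)) (serve : ℕ → ℕ × ℕ) (I : Ivl) (t : ℕ) : Prop :=
  ∃ p ∈ triBaseAll n R serve, p.1 ∈ ivlNodes Δ I ∧ p.2 ≤ t ∧ t < p.2 + 2 ^ I.1

/-- `C_t`: the nodes storing a copy at time `t`.  `C_0 = {r0}`, and `C_{t+1}`
consists of the origin together with the nodes selected (by `sel`) for the
commitments made at time `t` (listed, in processing order, in `commitList t`). -/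
def lineC (r0 : ℕ) (commitList : ℕ → List Ivl) (sel : ℕ → Ivl → ℕ) : ℕ → Finset ℕ
  | 0 => {r0}
  | t + 1 => insert r0 ((commitList t).map (sel t)).toFinset

/-- The nodes to which the delivery phase for request `r_j` delivers a copy:
the horizontal path from `q^on_j` to `r_j` together with the nodes of `Base(j)`. -/
def servedNodes (n : ℕ) (R : List (ℕ × ℕ)) (serve : ℕ → ℕ × ℕ) (qon : ℕ → ℕ)
    (j : ℕ) : Finset ℕ :=
  Finset.Icc (min (qon j) (req R j).1) (max (qon j) (req R j).1) ∪
    (triBase n R serve j).image Prod.fst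

/-- The nodes whose time-`t_i` replica is in lineon's solution when request `r_i`
arrives: the caches `C_{t_i}` together with everything delivered for earlier
requests of the same time. -/
def availNodes (n r0 : ℕ) (R : List (ℕ × ℕ)) (serve : ℕ → ℕ × ℕ)
    (commitList : ℕ → List Ivl) (sel : ℕ → Ivl → ℕ) (qon : ℕ → ℕ) (i : ℕ) : Finset ℕ :=
  lineC r0 commitList sel (req R i).2 ∪
    (Finset.range i).biUnion fun j =>
      if (req R j).2 = (req R i).2 then servedNodes n R serve qon j else ∅

/-- An execution of Algorithm lineon with parameter `Δ` (where `n = Δ · 2^k`) on the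
instance `(n, r0, R)`.  It simulates Triangle (`tri`); `commitList t` is the list of
intervals committing at time `t`, in the order processed by the storage phase
(levels in increasing order); `sel t I` is the node selected for the commitment
`⟨I,t⟩` in step (S1.2); `qon i` is the node of the serving replica `q^on_i` of
request `r_i` chosen in the delivery phase (step (D1)). -/
structure LineonExec (n Δ k r0 : ℕ) (R : List (ℕ × ℕ)) where
  tri : TriangleExec n r0 R
  hn : n = Δ * 2 ^ k
  commitList : ℕ → List Ivl
  sel : ℕ → Ivl → ℕ
  qon : ℕ → ℕ
  commit_valid : ∀ t, ∀ I ∈ commitList t, validIvl Δ k I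
  commit_nodup : ∀ t, (commitList t).Nodup
  commit_sorted : ∀ t, ((commitList t).map Prod.fst).Pairwise (· ≤ ·)
  commit_stay : ∀ t, ∀ I ∈ commitList t, stayActiveAt n Δ R tri.serve I t
  commit_fresh : ∀ t l₁ I l₂, commitList t = l₁ ++ I :: l₂ →
      ∀ v ∈ nbhdNodes n Δ I, v ≠ r0 ∧ v ∉ l₁.map (sel t)
  commit_tail : ∀ t, lastT R < t → commitList t = []
  sel_nbhd : ∀ t, ∀ I ∈ commitList t, sel t I ∈ nbhdNodes n Δ I
  sel_src : ∀ t, ∀ I ∈ commitList t,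
      sel t I ∈ baseNodesAt n R tri.serve t ∨ sel t I ∈ lineC r0 commitList sel t
  loop_done : ∀ t ≤ lastT R, ∀ I, validIvl Δ k I → stayActiveAt n Δ R tri.serve I t →
      ∃ v ∈ nbhdNodes n Δ I, v ∈ lineC r0 commitList sel (t + 1)
  qon_mem : ∀ i < R.length, qon i ∈ availNodes n r0 R tri.serve commitList sel qon i
  qon_min : ∀ i < R.length, ∀ w ∈ availNodes n r0 R tri.serve commitList sel qon i,
      natdist (qon i) (req R i).1 ≤ natdist w (req R i).1

/-- The online radius `ρ^on_i = d(q^on_i, r_i)`. -/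
def lineRon (R : List (ℕ × ℕ)) (qon : ℕ → ℕ) (i : ℕ) : ℕ := natdist (qon i) (req R i).1

/-- `H^on`: the horizontal edges of lineon's final solution. -/
def lineHon (n : ℕ) (R : List (ℕ × ℕ)) (serve : ℕ → ℕ × ℕ) (qon : ℕ → ℕ) : Finset GEdge :=
  (Finset.range R.length).biUnion fun i =>
    (Finset.Ico (min (qon i) (req R i).1) (max (qon i) (req R i).1)).image
        (fun v => GEdge.h v (req R i).2) ∪
      triBaseH n R serve i

/-- `A^on`: the arcs of lineon's final solution, i.e. the arcs `((v,t),(v,t+1))`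
with `(v,t+1) ∈ C_{t+1}`. -/
def lineAon (r0 : ℕ) (R : List (ℕ × ℕ)) (commitList : ℕ → List Ivl)
    (sel : ℕ → Ivl → ℕ) : Finset GEdge :=
  (Finset.range (lastT R)).biUnion fun t =>
    (lineC r0 commitList sel (t + 1)).image fun v => GEdge.a v t

/-- `COMMIT`, as a finite set of pairs `⟨I, t⟩`. -/
def commitSet (R : List (ℕ × ℕ)) (commitList : ℕ → List Ivl) : Finset (Ivl × ℕ) :=
  (Finset.range (lastT R + 1)).biUnion fun t =>
    (commitList t).toFinset.image fun I => (I, t)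

/-! ## Sessions and bins -/

open scoped Classical in
/-- The times at which interval `I` contains a base replica. -/
noncomputable def baseTimes (n Δ : ℕ) (R : List (ℕ × ℕ)) (serve : ℕ → ℕ × ℕ)
    (I : Ivl) : Finset ℕ :=
  ((triBaseAll n R serve).filter fun p => p.1 ∈ ivlNodes Δ I).image Prod.snd

/-- `t⁻`: the last time before `t` at which `I` contains a base replica. -/
noncomputable def tminus (n Δ : ℕ) (R : List (ℕ × ℕ)) (serve : ℕ → ℕ × ℕ)
    (I : Ivl) (t : ℕ) : ℕ :=
  ((baseTimes n Δ R serve I).filter fun τ => τ < t).sup id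

/-- `t⁺`: the first time after `s` at which `I` contains a base replica
(`⊤` if there is none). -/
noncomputable def tplusE (n Δ : ℕ) (R : List (ℕ × ℕ)) (serve : ℕ → ℕ × ℕ)
    (I : Ivl) (s : ℕ) : WithTop ℕ :=
  ((baseTimes n Δ R serve I).filter fun τ => s < τ).min

/-- `t⁺` as a natural number (junk value `0` if there is no later base time). -/
noncomputable def tplusN (n Δ : ℕ) (R : List (ℕ × ℕ)) (serve : ℕ → ℕ × ℕ)
    (I : Ivl) (s : ℕ) : ℕ :=
  WithTop.untopD 0 (tplusE n Δ R serve I s)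

/-- The end `t⁺_0` of the first (uncommitted) session of `I`: the first time at
which `I` contains a base replica. -/
noncomputable def firstBase (n Δ : ℕ) (R : List (ℕ × ℕ)) (serve : ℕ → ℕ × ℕ)
    (I : Ivl) : ℕ :=
  WithTop.untopD 0 (baseTimes n Δ R serve I).min

/-- `BIN`: a bin is a pair of a committed interval `I` of positive level and (the
start `t⁻` of) one of its committed sessions. -/
noncomputable def lineBins (n Δ : ℕ) (R : List (ℕ × ℕ)) (serve : ℕ → ℕ × ℕ)
    (commitList : ℕ → List Ivl) : Finset (Ivl × ℕ) :=
  ((commitSet R commitList).filter fun p => 0 < p.1.1).image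
    fun p => (p.1, tminus n Δ R serve p.1 p.2)

/-- The bin `b = (I, t⁻)` is the last committed session of `I`. -/
def isLastBin (n Δ : ℕ) (R : List (ℕ × ℕ)) (serve : ℕ → ℕ × ℕ)
    (commitList : ℕ → List Ivl) (b : Ivl × ℕ) : Prop :=
  ∀ b' ∈ lineBins n Δ R serve commitList, b'.1 = b.1 → b'.2 ≤ b.2

open scoped Classical in
/-- The payer of bin `b = (I, t⁻)`: the rectangle `N(I)[t⁻, t⁺]`, except that the
last committed session of `I` is paid by the rectangle `N(I)[0, t⁺_0]` of the
first (uncommitted) session of `I`. -/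
noncomputable def payer (n Δ : ℕ) (R : List (ℕ × ℕ)) (serve : ℕ → ℕ × ℕ)
    (commitList : ℕ → List Ivl) (b : Ivl × ℕ) : Finset (ℕ × ℕ) :=
  if isLastBin n Δ R serve commitList b then
    nbhdNodes n Δ b.1 ×ˢ Finset.Icc 0 (firstBase n Δ R serve b.1)
  else nbhdNodes n Δ b.1 ×ˢ Finset.Icc b.2 (tplusN n Δ R serve b.1 b.2)

open scoped Classical in
/-- `combin(b)`: the commitments of `I` belonging to the session of bin `b`. -/
noncomputable def combin (n Δ : ℕ) (R : List (ℕ × ℕ)) (serve : ℕ → ℕ × ℕ)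
    (commitList : ℕ → List Ivl) (b : Ivl × ℕ) : Finset (Ivl × ℕ) :=
  (commitSet R commitList).filter fun p =>
    p.1 = b.1 ∧ tminus n Δ R serve p.1 p.2 = b.2

open scoped Classical in
/-- `horbin(b)`: the horizontal edges of `H^T` with both endpoints in `b`'s payer. -/
noncomputable def horbin (n Δ : ℕ) (R : List (ℕ × ℕ)) (serve : ℕ → ℕ × ℕ)
    (addH : ℕ → Finset GEdge) (commitList : ℕ → List Ivl) (b : Ivl × ℕ) : Finset GEdge :=
  (triHT R addH).filter fun e => eVerts e ⊆ payer n Δ R serve commitList b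

open scoped Classical in
/-- `arcbin(b)`: the arcs `((v,t),(v,t+1))` of `A^T` lying in `b`'s payer such that
`b`'s interval commits at time `t`. -/
noncomputable def arcbin (n Δ : ℕ) (R : List (ℕ × ℕ)) (serve : ℕ → ℕ × ℕ)
    (commitList : ℕ → List Ivl) (b : Ivl × ℕ) : Finset GEdge :=
  (triAT R serve).filter fun e =>
    eVerts e ⊆ payer n Δ R serve commitList b ∧
      ∃ v t, e = GEdge.a v t ∧ (b.1, t) ∈ commitSet R commitList


lemma step_dvd {u a b : ℕ} (hu : 0 < u) (ha : u ∣ a) (hb : u ∣ b) (h : a < b) :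
    a + u ≤ b := by
  obtain ⟨c, rfl⟩ := ha
  obtain ⟨d, rfl⟩ := hb
  have hcd : c < d := lt_of_mul_lt_mul_left h (Nat.zero_le u)
  calc u * c + u = u * (c + 1) := by ring
    _ ≤ u * d := Nat.mul_le_mul_left u hcd

lemma eq_or_two_le {u w : ℕ} (hu : 0 < u) (hd : u ∣ w) (hw : 0 < w) :
    w = u ∨ 2 * u ≤ w := by
  obtain ⟨c, rfl⟩ := hd
  rcases Nat.lt_or_ge c 2 with hc | hc
  · interval_cases c
    · simp at hw
    · left; ring
  · right; calc 2 * u = u * 2 := by ring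
      _ ≤ u * c := Nat.mul_le_mul_left u hc

/-- Abstract properties of the neighborhood `N(I) = (a, b]` of a level interval with
block size `u`, inside the line `(0, n]`. -/
def NB (n u a b : ℕ) : Prop :=
  0 < u ∧ u ∣ a ∧ u ∣ b ∧ a < b ∧ b ≤ a + 3 * u ∧ b ≤ n ∧ u ∣ n ∧
    (0 < a → b < a + 3 * u → b = n) ∧ (b < n → b < a + 3 * u → a = 0)

lemma NB.mirror {n u a b : ℕ} (h : NB n u a b) : NB n u (n - b) (n - a) := by
  obtain ⟨hu, hda, hdb, hab, hw, hbn, hdn, ht1, ht2⟩ := h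
  have han : a ≤ n := le_trans (le_of_lt hab) hbn
  refine ⟨hu, Nat.dvd_sub hdn hdb, Nat.dvd_sub hdn hda, by omega, by omega, by omega,
    hdn, ?_, ?_⟩
  · intro h1 h2
    have : b < n := by omega
    have := ht2 this (by omega)
    omega
  · intro h1 h2
    have : 0 < a := by omega
    have := ht1 this (by omega)
    omega

lemma core4L (n v : ℕ) (u a b x : ℕ → ℕ)
    (hNB : ∀ q, q ≤ 3 → NB n (u q) (a q) (b q))
    (hdvd : ∀ q q', q ≤ q' → q' ≤ 3 → u q ∣ u q')
    (hv : ∀ q, q ≤ 3 → a q < v ∧ v ≤ b q)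
    (hx : ∀ q, q < 3 → a q < x q ∧ x q ≤ b q)
    (hf : ∀ q q', q < q' → q' ≤ 3 → ¬(a q' < x q ∧ x q ≤ b q'))
    (hne : ∀ q q', q < q' → q' ≤ 3 → u q = u q' → a q = a q' → 0 < a q → False)
    (i j : ℕ) (hij : i < j) (hj : j < 3) (hxi : x i < v) (hxj : x j < v) : False := by
  have hupos : ∀ q, q ≤ 3 → 0 < u q := fun q hq => (hNB q hq).1
  have hda : ∀ q, q ≤ 3 → u q ∣ a q := fun q hq => (hNB q hq).2.1
  have hdb : ∀ q, q ≤ 3 → u q ∣ b q := fun q hq => (hNB q hq).2.2.1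
  have hw : ∀ q, q ≤ 3 → b q ≤ a q + 3 * u q := fun q hq => (hNB q hq).2.2.2.2.1
  have hbn : ∀ q, q ≤ 3 → b q ≤ n := fun q hq => (hNB q hq).2.2.2.2.2.1
  have ht1 : ∀ q, q ≤ 3 → 0 < a q → b q < a q + 3 * u q → b q = n :=
    fun q hq => (hNB q hq).2.2.2.2.2.2.2.1
  -- left-step: if x q < v then a q + u q ≤ a q'
  have L : ∀ q q', q < q' → q' ≤ 3 → x q < v → a q + u q ≤ a q' := by
    intro q q' hlt hle hxv
    have hq3 : q ≤ 3 := by omega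
    have hxb : x q ≤ b q' := le_trans (le_of_lt hxv) (hv q' hle).2
    have hxa : x q ≤ a q' := by
      by_contra hcon
      exact hf q q' hlt hle ⟨by omega, hxb⟩
    have := (hx q (by omega)).1
    exact step_dvd (hupos q hq3) (hda q hq3) (dvd_trans (hdvd q q' (by omega) hle) (hda q' hle))
      (by omega)
  -- right-step: if v < x q then b q' + u q ≤ b q
  have R : ∀ q q', q < q' → q' ≤ 3 → v < x q → b q' + u q ≤ b q := by
    intro q q' hlt hle hxv
    have hq3 : q ≤ 3 := by omega
    have hxa : a q' < x q := lt_of_le_of_lt (le_of_lt (hv q' hle).1) hxv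
    have hxb : b q' < x q := by
      by_contra hcon
      exact hf q q' hlt hle ⟨hxa, by omega⟩
    have := (hx q (by omega)).2
    exact step_dvd (hupos q hq3) (dvd_trans (hdvd q q' (by omega) hle) (hdb q' hle))
      (hdb q hq3) (by omega)
  have hi3 : i ≤ 3 := by omega
  have hj3 : j ≤ 3 := by omega
  have h1 : a i + u i ≤ a j := L i j hij hj3 hxi
  have h2 : a j + u j ≤ a 3 := L j 3 (by omega) (by omega) hxj
  have hv3a : a 3 < v := (hv 3 (by omega)).1
  have hvbi : v ≤ b i := (hv i hi3).2
  have hwi : b i ≤ a i + 3 * u i := hw i hi3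
  have huji : u j = u i := by
    rcases eq_or_two_le (hupos i hi3) (hdvd i j (le_of_lt hij) hj3) (hupos j hj3) with h | h
    · exact h
    · omega
  -- a j = a i + u i
  have haj : a j = a i + u i := by
    by_contra hcon
    have : a i + u i < a j := by omega
    have : a i + u i + u i ≤ a j :=
      step_dvd (hupos i hi3) (Dvd.dvd.add (hda i hi3) dvd_rfl)
        (dvd_trans (hdvd i j (le_of_lt hij) hj3) (hda j hj3)) this
    omega
  have hdua3 : u i ∣ a 3 := dvd_trans (hdvd i 3 (by omega) (by omega)) (hda 3 (by omega))
  have ha3 : a 3 = a i + 2 * u i := by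
    have hlow : a i + 2 * u i ≤ a 3 := by omega
    by_contra hcon
    have : a i + 2 * u i < a 3 := by omega
    have : a i + 2 * u i + u i ≤ a 3 :=
      step_dvd (hupos i hi3) (by exact Dvd.dvd.add (hda i hi3) (Dvd.dvd.mul_left dvd_rfl 2))
        hdua3 this
    omega
  have hupi : 0 < u i := hupos i hi3
  -- the third index m
  have hcases : (i = 0 ∧ j = 1) ∨ (i = 0 ∧ j = 2) ∨ (i = 1 ∧ j = 2) := by omega
  have hxm3 : ∀ m, m < 3 → x m ≠ v := by
    intro m hm hcon
    exact hf m 3 (by omega) (by omega) ⟨by omega, by rw [hcon]; exact (hv 3 (by omega)).2⟩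
  -- the all-left contradiction
  have LLL : x 0 < v → x 1 < v → x 2 < v → False := by
    intro h0 h1 h2
    have l01 : a 0 + u 0 ≤ a 1 := L 0 1 (by omega) (by omega) h0
    have l12 : a 1 + u 1 ≤ a 2 := L 1 2 (by omega) (by omega) h1
    have l23 : a 2 + u 2 ≤ a 3 := L 2 3 (by omega) (by omega) h2
    have hu01 : u 0 ≤ u 1 := Nat.le_of_dvd (hupos 1 (by omega)) (hdvd 0 1 (by omega) (by omega))
    have hu02 : u 0 ≤ u 2 := Nat.le_of_dvd (hupos 2 (by omega)) (hdvd 0 2 (by omega) (by omega))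
    have : v ≤ b 0 := (hv 0 (by omega)).2
    have : b 0 ≤ a 0 + 3 * u 0 := hw 0 (by omega)
    omega
  rcases hcases with ⟨hi, hjj⟩ | ⟨hi, hjj⟩ | ⟨hi, hjj⟩
  · -- i = 0, j = 1, m = 2
    subst hi; subst hjj
    rcases lt_or_gt_of_ne (hxm3 2 (by omega)) with hm | hm
    · exact LLL hxi hxj hm
    · -- x 2 > v : right
      have ha2 : a 2 = a 0 + 2 * u 0 := by
        have l02 : a 1 + u 1 ≤ a 2 := L 1 2 (by omega) (by omega) hxj
        have hup : a 2 < v := (hv 2 (by omega)).1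
        have hdu2 : u 0 ∣ a 2 := dvd_trans (hdvd 0 2 (by omega) (by omega)) (hda 2 (by omega))
        by_contra hcon
        have : a 0 + 2 * u 0 < a 2 := by omega
        have : a 0 + 2 * u 0 + u 0 ≤ a 2 :=
          step_dvd hupi (by exact Dvd.dvd.add (hda 0 (by omega)) (Dvd.dvd.mul_left dvd_rfl 2))
            hdu2 this
        omega
      have hr : b 3 + u 2 ≤ b 2 := R 2 3 (by omega) (by omega) hm
      rcases eq_or_two_le (hupos 2 (by omega)) (hdvd 2 3 (by omega) (by omega))
          (hupos 3 (by omega)) with he | h2le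
      · exact hne 2 3 (by omega) (by omega) he.symm (by omega) (by omega)
      · have hvb3 : v ≤ b 3 := (hv 3 (by omega)).2
        have hw2 : b 2 ≤ a 2 + 3 * u 2 := hw 2 (by omega)
        have hdd : u 3 ∣ b 3 - a 3 := Nat.dvd_sub (hdb 3 (by omega)) (hda 3 (by omega))
        have hdl : u 3 ≤ b 3 - a 3 := Nat.le_of_dvd (by omega) hdd
        have hb3 : b 3 = a 3 + u 3 := by omega
        have hb3n : b 3 = n := ht1 3 (by omega) (by omega)
          (by have := hupos 3 (by omega); omega)
        have := hbn 2 (by omega)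
        have := hupos 2 (by omega)
        omega
  · -- i = 0, j = 2, m = 1
    subst hi; subst hjj
    rcases lt_or_gt_of_ne (hxm3 1 (by omega)) with hm | hm
    · exact LLL hxi hm hxj
    · -- x 1 > v : right
      have hu1 : u 1 = u 0 := by
        refine Nat.dvd_antisymm ?_ (hdvd 0 1 (by omega) (by omega))
        have := hdvd 1 2 (by omega) (by omega)
        rwa [huji] at this
      have l01 : a 0 + u 0 ≤ a 1 := L 0 1 (by omega) (by omega) hxi
      have hdu1 : u 0 ∣ a 1 := hu1 ▸ hda 1 (by omega)
      have ha1v : a 1 < v := (hv 1 (by omega)).1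
      have ha1ub : a 1 ≤ a 0 + 2 * u 0 := by
        by_contra hcon
        have : a 0 + 2 * u 0 < a 1 := by omega
        have : a 0 + 2 * u 0 + u 0 ≤ a 1 :=
          step_dvd hupi (by exact Dvd.dvd.add (hda 0 (by omega)) (Dvd.dvd.mul_left dvd_rfl 2))
            hdu1 this
        omega
      rcases (by omega : a 1 = a 0 + u 0 ∨ a 1 = a 0 + 2 * u 0 ∨
          (a 0 + u 0 < a 1 ∧ a 1 < a 0 + 2 * u 0)) with h1 | h1 | h1
      · exact hne 1 2 (by omega) (by omega) (by omega) (by omega) (by omega)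
      · -- a 1 = a 3
        rcases eq_or_two_le hupi (hdvd 0 3 (by omega) (by omega)) (hupos 3 (by omega))
            with he | h2le
        · exact hne 1 3 (by omega) (by omega) (by omega) (by omega) (by omega)
        · have hr : b 3 + u 1 ≤ b 1 := R 1 3 (by omega) (by omega) hm
          have hvb3 : v ≤ b 3 := (hv 3 (by omega)).2
          have hw1 : b 1 ≤ a 1 + 3 * u 1 := hw 1 (by omega)
          have hdd : u 3 ∣ b 3 - a 3 := Nat.dvd_sub (hdb 3 (by omega)) (hda 3 (by omega))
          have hdl : u 3 ≤ b 3 - a 3 := Nat.le_of_dvd (by omega) hdd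
          have hb3 : b 3 = a 3 + u 3 := by omega
          have hb3n : b 3 = n := ht1 3 (by omega) (by omega)
            (by have := hupos 3 (by omega); omega)
          have := hbn 1 (by omega)
          have := hupos 1 (by omega)
          omega
      · -- impossible by divisibility
        have : a 0 + u 0 + u 0 ≤ a 1 :=
          step_dvd hupi (Dvd.dvd.add (hda 0 (by omega)) dvd_rfl) hdu1 (by omega)
        omega
  · -- i = 1, j = 2, m = 0
    subst hi; subst hjj
    rcases lt_or_gt_of_ne (hxm3 0 (by omega)) with hm | hm
    · exact LLL hm hxi hxj
    · -- x 0 > v : right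
      have hu0 : u 0 ∣ u 1 := hdvd 0 1 (by omega) (by omega)
      have hu0p : 0 < u 0 := hupos 0 (by omega)
      have hr3 : b 3 + u 0 ≤ b 0 := R 0 3 (by omega) (by omega) hm
      have hvb3 : v ≤ b 3 := (hv 3 (by omega)).2
      have hw0 : b 0 ≤ a 0 + 3 * u 0 := hw 0 (by omega)
      have ha0v : a 0 < v := (hv 0 (by omega)).1
      have hu01 : u 0 ≤ u 1 := Nat.le_of_dvd hupi hu0
      -- d = b 3 - a 3 ∈ (0, u 1 + 2 u 0 - 1]
      have hdub : b 3 ≤ a 0 + 2 * u 0 := by omega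
      have hdd : u 3 ∣ b 3 - a 3 := Nat.dvd_sub (hdb 3 (by omega)) (hda 3 (by omega))
      have hdl : u 3 ≤ b 3 - a 3 := Nat.le_of_dvd (by omega) hdd
      have hdU : u 1 ∣ u 3 := hdvd 1 3 (by omega) (by omega)
      have hu3p : 0 < u 3 := hupos 3 (by omega)
      -- b 3 - a 3 ≤ u 1 + 2 * u 0 - 1 ≤ 3 u 1 - 1
      have hdsmall : b 3 - a 3 + 1 ≤ u 1 + 2 * u 0 := by omega
      rcases eq_or_two_le hupi hdU hu3p with hU3 | h2le
      · -- u 3 = u 1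
        have : u 1 ∣ b 3 - a 3 := hU3 ▸ hdd
        rcases (by omega : b 3 - a 3 = u 1 ∨ (u 1 < b 3 - a 3 ∧ b 3 - a 3 < 3 * u 1)) with hd | hd
        · have hb3n : b 3 = n := ht1 3 (by omega) (by omega) (by omega)
          have := hbn 0 (by omega)
          omega
        · have hd2 : b 3 - a 3 = 2 * u 1 := by
            obtain ⟨c, hc⟩ := this
            have : c = 2 := by
              rcases Nat.lt_or_ge c 2 with h | h
              · interval_cases c <;> omega
              · rcases Nat.lt_or_ge c 3 with h' | h' 
                · omega
                · exfalso
                  have : 3 * u 1 ≤ u 1 * c := by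
                    calc 3 * u 1 = u 1 * 3 := by ring
                      _ ≤ u 1 * c := Nat.mul_le_mul_left _ h'
                  omega
            subst this
            omega
          -- then u 0 = u 1
          have hu0e : u 0 = u 1 := by
            rcases eq_or_two_le hu0p hu0 hupi with h | h
            · omega
            · omega
          -- a 0 = a 3
          have hge : a 3 ≤ a 0 := by omega
          have hdu0a3 : u 1 ∣ a 0 := hu0e ▸ hda 0 (by omega)
          have ha03 : a 0 = a 3 := by
            by_contra hcon
            have : a 3 + u 1 ≤ a 0 := step_dvd hupi hdua3 hdu0a3 (by omega)
            omega
          exact hne 0 3 (by omega) (by omega) (by omega) (by omega) (by omega)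
      · -- u 3 ≥ 2 u 1: forces b 3 = a 3 + u 3, truncation
        have : b 3 - a 3 < 2 * u 3 := by omega
        have hb3 : b 3 - a 3 = u 3 := by
          obtain ⟨c, hc⟩ := hdd
          have : c = 1 := by
            rcases Nat.lt_or_ge c 2 with h | h
            · interval_cases c <;> omega
            · exfalso
              have : 2 * u 3 ≤ u 3 * c := by
                calc 2 * u 3 = u 3 * 2 := by ring
                  _ ≤ u 3 * c := Nat.mul_le_mul_left _ h
              omega
          subst this
          omega
        have hb3n : b 3 = n := ht1 3 (by omega) (by omega) (by omega)
        have := hbn 0 (by omega)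
        omega

lemma core4 (n v : ℕ) (u a b x : ℕ → ℕ)
    (hNB : ∀ q, q ≤ 3 → NB n (u q) (a q) (b q))
    (hdvd : ∀ q q', q ≤ q' → q' ≤ 3 → u q ∣ u q')
    (hv : ∀ q, q ≤ 3 → a q < v ∧ v ≤ b q)
    (hx : ∀ q, q < 3 → a q < x q ∧ x q ≤ b q)
    (hf : ∀ q q', q < q' → q' ≤ 3 → ¬(a q' < x q ∧ x q ≤ b q'))
    (hne : ∀ q q', q < q' → q' ≤ 3 → u q = u q' → a q = a q' → 0 < a q → False)
    (hneb : ∀ q q', q < q' → q' ≤ 3 → u q = u q' → b q = b q' → b q < n → False) : False := by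
  have hbound : ∀ q, q ≤ 3 → a q < b q ∧ b q ≤ n := fun q hq =>
    ⟨(hNB q hq).2.2.2.1, (hNB q hq).2.2.2.2.2.1⟩
  have hvn : v ≤ n := le_trans (hv 0 (by omega)).2 (hbound 0 (by omega)).2
  have hxn : ∀ q, q < 3 → x q ≤ n := fun q hq =>
    le_trans (hx q hq).2 (hbound q (by omega)).2
  have hxne : ∀ q, q < 3 → x q ≠ v := by
    intro q hq hcon
    refine hf q 3 (by omega) (by omega) ⟨?_, ?_⟩
    · rw [hcon]; exact (hv 3 (by omega)).1
    · rw [hcon]; exact (hv 3 (by omega)).2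
  -- mirror data
  have mirror : ∀ (i j : ℕ), i < j → j < 3 → v < x i → v < x j → False := by
    intro i j hij hj hxi hxj
    refine core4L n (n + 1 - v) u (fun q => n - b q) (fun q => n - a q)
      (fun q => n + 1 - x q) ?_ hdvd ?_ ?_ ?_ ?_ i j hij hj ?_ ?_
    · exact fun q hq => (hNB q hq).mirror
    · intro q hq
      have := hbound q hq
      have := (hv q hq)
      constructor <;> omega
    · intro q hq
      have := hbound q (by omega)
      have := hx q hq
      have := hxn q hq
      constructor <;> omega
    · intro q q' hlt hle hcon
      have h1 := hbound q' hle
      have h2 := hxn q (by omega)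
      have h3 := hx q (by omega)
      exact hf q q' hlt hle ⟨by omega, by omega⟩
    · intro q q' hlt hle hu hb hpos
      have h1 := (hbound q (by omega)).2
      have h2 := (hbound q' hle).2
      exact hneb q q' hlt hle hu (by omega) (by omega)
    · have := hxn i (by omega); omega
    · have := hxn j (by omega); omega
  rcases lt_or_gt_of_ne (hxne 0 (by omega)) with h0 | h0 <;>
    rcases lt_or_gt_of_ne (hxne 1 (by omega)) with h1 | h1 <;>
      rcases lt_or_gt_of_ne (hxne 2 (by omega)) with h2 | h2
  · exact core4L n v u a b x hNB hdvd hv hx hf hne 0 1 (by omega) (by omega) h0 h1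
  · exact core4L n v u a b x hNB hdvd hv hx hf hne 0 1 (by omega) (by omega) h0 h1
  · exact core4L n v u a b x hNB hdvd hv hx hf hne 0 2 (by omega) (by omega) h0 h2
  · exact mirror 1 2 (by omega) (by omega) h1 h2
  · exact core4L n v u a b x hNB hdvd hv hx hf hne 1 2 (by omega) (by omega) h1 h2
  · exact mirror 0 2 (by omega) (by omega) h0 h2
  · exact mirror 0 1 (by omega) (by omega) h0 h1
  · exact mirror 0 1 (by omega) (by omega) h0 h1

/-! ### Decomposition of a two-element sublist -/

lemma pair_decomp {α : Type*} {x y : α} :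
    ∀ {L : List α}, List.Sublist [x, y] L → ∃ l₁ l₂, L = l₁ ++ y :: l₂ ∧ x ∈ l₁ := by
  intro L h
  induction L with
  | nil => simp at h
  | cons a L ih =>
    cases h with
    | cons _ h' =>
      obtain ⟨l₁, l₂, he, hm⟩ := ih h'
      exact ⟨a :: l₁, l₂, by rw [he, List.cons_append], List.mem_cons_of_mem a hm⟩
    | cons_cons _ h' =>
      have hy : y ∈ L := (List.singleton_sublist).mp h'
      obtain ⟨s, t, rfl⟩ := List.append_of_mem hy
      exact ⟨x :: s, t, by simp, List.mem_cons_self⟩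

/-! ### The neighborhood of a valid interval satisfies `NB` -/

lemma nbhd_eq_Icc (n Δ : ℕ) (I : Ivl) :
    nbhdNodes n Δ I =
      Finset.Icc (Δ * (I.2 - 2) * 2 ^ I.1 + 1) (min n (Δ * (I.2 + 1) * 2 ^ I.1)) := rfl

lemma mem_nbhd_iff (n Δ : ℕ) (I : Ivl) (v : ℕ) :
    v ∈ nbhdNodes n Δ I ↔
      Δ * (I.2 - 2) * 2 ^ I.1 < v ∧ v ≤ min n (Δ * (I.2 + 1) * 2 ^ I.1) := by
  rw [nbhd_eq_Icc, Finset.mem_Icc]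
  omega

lemma nbhd_NB (n Δ k : ℕ) (hΔ : 1 ≤ Δ) (hn : n = Δ * 2 ^ k) (I : Ivl)
    (hI : validIvl Δ k I) :
    NB n (Δ * 2 ^ I.1) (Δ * (I.2 - 2) * 2 ^ I.1) (min n (Δ * (I.2 + 1) * 2 ^ I.1)) := by
  obtain ⟨hl, hj1, hj2⟩ := hI
  set l := I.1
  set j := I.2
  have hP : 0 < Δ * 2 ^ l := Nat.mul_pos hΔ (Nat.pow_pos (by norm_num))
  have hdn : Δ * 2 ^ l ∣ n := ⟨2 ^ (k - l), by rw [hn, mul_assoc, ← pow_add]; congr 2; omega⟩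
  have hda : Δ * 2 ^ l ∣ Δ * (j - 2) * 2 ^ l := ⟨j - 2, by ring⟩
  have hdX : Δ * 2 ^ l ∣ Δ * (j + 1) * 2 ^ l := ⟨j + 1, by ring⟩
  have hdb : Δ * 2 ^ l ∣ min n (Δ * (j + 1) * 2 ^ l) := by
    rcases min_cases n (Δ * (j + 1) * 2 ^ l) with ⟨h, _⟩ | ⟨h, _⟩ <;> rw [h]
    · exact hdn
    · exact hdX
  have haX : Δ * (j - 2) * 2 ^ l < Δ * (j + 1) * 2 ^ l := by
    have : j - 2 < j + 1 := by omega
    calc Δ * (j - 2) * 2 ^ l = (j - 2) * (Δ * 2 ^ l) := by ring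
      _ < (j + 1) * (Δ * 2 ^ l) := (Nat.mul_lt_mul_right hP).mpr this
      _ = Δ * (j + 1) * 2 ^ l := by ring
  have han : Δ * (j - 2) * 2 ^ l < n := by
    have h2 : j - 2 < 2 ^ (k - l) := by
      have : (1 : ℕ) ≤ 2 ^ (k - l) := Nat.one_le_two_pow
      omega
    calc Δ * (j - 2) * 2 ^ l = (j - 2) * (Δ * 2 ^ l) := by ring
      _ < 2 ^ (k - l) * (Δ * 2 ^ l) := (Nat.mul_lt_mul_right hP).mpr h2
      _ = Δ * (2 ^ (k - l) * 2 ^ l) := by ring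
      _ = Δ * 2 ^ k := by rw [← pow_add]; congr 2; omega
      _ = n := hn.symm
  have hwidth : Δ * (j + 1) * 2 ^ l ≤ Δ * (j - 2) * 2 ^ l + 3 * (Δ * 2 ^ l) := by
    have : j + 1 ≤ (j - 2) + 3 := by omega
    calc Δ * (j + 1) * 2 ^ l = (j + 1) * (Δ * 2 ^ l) := by ring
      _ ≤ ((j - 2) + 3) * (Δ * 2 ^ l) := Nat.mul_le_mul_right _ this
      _ = Δ * (j - 2) * 2 ^ l + 3 * (Δ * 2 ^ l) := by ring
  have hXeq : 2 < j → Δ * (j + 1) * 2 ^ l = Δ * (j - 2) * 2 ^ l + 3 * (Δ * 2 ^ l) := by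
    intro hj
    have : j + 1 = (j - 2) + 3 := by omega
    calc Δ * (j + 1) * 2 ^ l = (j + 1) * (Δ * 2 ^ l) := by ring
      _ = ((j - 2) + 3) * (Δ * 2 ^ l) := by rw [← this]
      _ = Δ * (j - 2) * 2 ^ l + 3 * (Δ * 2 ^ l) := by ring
  refine ⟨hP, hda, hdb, ?_, ?_, min_le_left _ _, hdn, ?_, ?_⟩
  · exact lt_min han haX
  · exact le_trans (min_le_right _ _) hwidth
  · -- trunc1
    intro hpos hlt
    have hj3 : 2 < j := by
      by_contra hcon
      have : j - 2 = 0 := by omega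
      rw [this] at hpos
      simp at hpos
    have hX := hXeq hj3
    rcases min_cases n (Δ * (j + 1) * 2 ^ l) with ⟨h, _⟩ | ⟨h, h'⟩
    · exact h
    · rw [h] at hlt; omega
  · -- trunc2
    intro hbn hlt
    have hb : min n (Δ * (j + 1) * 2 ^ l) = Δ * (j + 1) * 2 ^ l := by
      rcases min_cases n (Δ * (j + 1) * 2 ^ l) with ⟨h, _⟩ | ⟨h, _⟩
      · rw [h] at hbn; omega
      · exact h
    rcases Nat.lt_or_ge 2 j with hj3 | hj3
    · exfalso
      rw [hb, hXeq hj3] at hlt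
      omega
    · have : j - 2 = 0 := by omega
      rw [this]
      ring

/-! ### Distinct valid intervals of the same level have different neighborhoods -/

lemma interval_eq_of_a (Δ : ℕ) (hΔ : 1 ≤ Δ) (I I' : Ivl) (hl : I.1 = I'.1)
    (ha : Δ * (I.2 - 2) * 2 ^ I.1 = Δ * (I'.2 - 2) * 2 ^ I'.1)
    (hpos : 0 < Δ * (I.2 - 2) * 2 ^ I.1) : I = I' := by
  have hP : 0 < Δ * 2 ^ I.1 := Nat.mul_pos hΔ (Nat.pow_pos (by norm_num))
  rw [← hl] at ha
  have ha' : (I.2 - 2) * (Δ * 2 ^ I.1) = (I'.2 - 2) * (Δ * 2 ^ I.1) := by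
    rw [show (I.2 - 2) * (Δ * 2 ^ I.1) = Δ * (I.2 - 2) * 2 ^ I.1 from by ring, ha]
    ring
  have hj : I.2 - 2 = I'.2 - 2 := Nat.eq_of_mul_eq_mul_right hP ha'
  have hjpos : 0 < I.2 - 2 := by
    rcases Nat.eq_zero_or_pos (I.2 - 2) with h | h
    · rw [h] at ha ⊢
      simp at hpos
      omega
    · exact h
  have : I.2 = I'.2 := by omega
  exact Prod.ext hl this

lemma interval_eq_of_b (n Δ : ℕ) (hΔ : 1 ≤ Δ) (I I' : Ivl) (hl : I.1 = I'.1)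
    (hb : min n (Δ * (I.2 + 1) * 2 ^ I.1) = min n (Δ * (I'.2 + 1) * 2 ^ I'.1))
    (hlt : min n (Δ * (I.2 + 1) * 2 ^ I.1) < n) : I = I' := by
  have hP : 0 < Δ * 2 ^ I.1 := Nat.mul_pos hΔ (Nat.pow_pos (by norm_num))
  rw [← hl] at hb
  have h1 : min n (Δ * (I.2 + 1) * 2 ^ I.1) = Δ * (I.2 + 1) * 2 ^ I.1 := by
    rcases min_cases n (Δ * (I.2 + 1) * 2 ^ I.1) with ⟨h, _⟩ | ⟨h, _⟩
    · rw [h] at hlt; omega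
    · exact h
  have h2 : min n (Δ * (I'.2 + 1) * 2 ^ I.1) = Δ * (I'.2 + 1) * 2 ^ I.1 := by
    rcases min_cases n (Δ * (I'.2 + 1) * 2 ^ I.1) with ⟨h, _⟩ | ⟨h, _⟩
    · rw [← hb] at h; omega
    · exact h
  rw [h1, h2] at hb
  have hb' : (I.2 + 1) * (Δ * 2 ^ I.1) = (I'.2 + 1) * (Δ * 2 ^ I.1) := by
    rw [show (I.2 + 1) * (Δ * 2 ^ I.1) = Δ * (I.2 + 1) * 2 ^ I.1 from by ring, hb]
    ring
  have hj : I.2 + 1 = I'.2 + 1 := Nat.eq_of_mul_eq_mul_right hP hb'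
  exact Prod.ext hl (by omega)

/-! ### At most three intervals committed at one time have `v` in their neighborhood -/

lemma commit_count_le_three (n Δ k : ℕ) (hΔ : 1 ≤ Δ) (hn : n = Δ * 2 ^ k)
    (cl : List Ivl) (sel : Ivl → ℕ)
    (hvalid : ∀ I ∈ cl, validIvl Δ k I)
    (hnodup : cl.Nodup)
    (hsorted : (cl.map Prod.fst).Pairwise (· ≤ ·))
    (hfresh : ∀ l₁ I l₂, cl = l₁ ++ I :: l₂ → ∀ w ∈ nbhdNodes n Δ I, w ∉ l₁.map sel)
    (hsel : ∀ I ∈ cl, sel I ∈ nbhdNodes n Δ I)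
    (v : ℕ) (L : List Ivl) (hsub : List.Sublist L cl)
    (hmem : ∀ I ∈ L, v ∈ nbhdNodes n Δ I) :
    L.length ≤ 3 := by
  by_contra hcon
  push_neg at hcon
  rcases L with _ | ⟨I0, L⟩; · simp at hcon
  rcases L with _ | ⟨I1, L⟩; · simp at hcon
  rcases L with _ | ⟨I2, L⟩; · simp at hcon
  rcases L with _ | ⟨I3, L⟩; · simp at hcon
  clear hcon
  set I : ℕ → Ivl := fun q => if q = 0 then I0 else if q = 1 then I1 else if q = 2 then I2 else I3 with hI
  have hmemL : ∀ q, q ≤ 3 → I q ∈ I0 :: I1 :: I2 :: I3 :: L := by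
    intro q hq
    interval_cases q <;> simp [hI]
  have p01 : List.Sublist [I0, I1] (I0 :: I1 :: I2 :: I3 :: L) :=
    List.Sublist.cons₂ _ (List.Sublist.cons₂ _ (List.nil_sublist _))
  have p02 : List.Sublist [I0, I2] (I0 :: I1 :: I2 :: I3 :: L) :=
    List.Sublist.cons₂ _ (List.Sublist.cons _ (List.Sublist.cons₂ _ (List.nil_sublist _)))
  have p03 : List.Sublist [I0, I3] (I0 :: I1 :: I2 :: I3 :: L) :=
    List.Sublist.cons₂ _ (List.Sublist.cons _ (List.Sublist.cons _
      (List.Sublist.cons₂ _ (List.nil_sublist _))))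
  have p12 : List.Sublist [I1, I2] (I0 :: I1 :: I2 :: I3 :: L) :=
    List.Sublist.cons _ (List.Sublist.cons₂ _ (List.Sublist.cons₂ _ (List.nil_sublist _)))
  have p13 : List.Sublist [I1, I3] (I0 :: I1 :: I2 :: I3 :: L) :=
    List.Sublist.cons _ (List.Sublist.cons₂ _ (List.Sublist.cons _
      (List.Sublist.cons₂ _ (List.nil_sublist _))))
  have p23 : List.Sublist [I2, I3] (I0 :: I1 :: I2 :: I3 :: L) :=
    List.Sublist.cons _ (List.Sublist.cons _ (List.Sublist.cons₂ _
      (List.Sublist.cons₂ _ (List.nil_sublist _))))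
  have pair : ∀ q q', q < q' → q' ≤ 3 → List.Sublist [I q, I q'] cl := by
    intro q q' h h'
    have hq3 : q ≤ 3 := by omega
    interval_cases q' <;> interval_cases q <;>
      first
        | exact p01.trans hsub | exact p02.trans hsub | exact p03.trans hsub
        | exact p12.trans hsub | exact p13.trans hsub | exact p23.trans hsub
  have hmemcl : ∀ q, q ≤ 3 → I q ∈ cl := fun q hq => hsub.subset (hmemL q hq)
  have hvalidq : ∀ q, q ≤ 3 → validIvl Δ k (I q) := fun q hq => hvalid _ (hmemcl q hq)
  -- numeric data
  set u : ℕ → ℕ := fun q => Δ * 2 ^ (I q).1 with hu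
  set a : ℕ → ℕ := fun q => Δ * ((I q).2 - 2) * 2 ^ (I q).1 with ha
  set b : ℕ → ℕ := fun q => min n (Δ * ((I q).2 + 1) * 2 ^ (I q).1) with hb
  set x : ℕ → ℕ := fun q => sel (I q) with hx
  have hNBq : ∀ q, q ≤ 3 → NB n (u q) (a q) (b q) := fun q hq =>
    nbhd_NB n Δ k hΔ hn (I q) (hvalidq q hq)
  have hvq : ∀ q, q ≤ 3 → a q < v ∧ v ≤ b q := by
    intro q hq
    have := (mem_nbhd_iff n Δ (I q) v).mp (hmem _ (hmemL q hq))
    exact ⟨this.1, this.2⟩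
  have hxq : ∀ q, q < 3 → a q < x q ∧ x q ≤ b q := by
    intro q hq
    have := (mem_nbhd_iff n Δ (I q) (sel (I q))).mp (hsel _ (hmemcl q (by omega)))
    exact ⟨this.1, this.2⟩
  have hfq : ∀ q q', q < q' → q' ≤ 3 → ¬(a q' < x q ∧ x q ≤ b q') := by
    intro q q' h h' hcon
    obtain ⟨l₁, l₂, he, hm⟩ := pair_decomp (pair q q' h h')
    have hw : sel (I q) ∈ nbhdNodes n Δ (I q') :=
      (mem_nbhd_iff n Δ (I q') (sel (I q))).mpr ⟨hcon.1, hcon.2⟩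
    exact hfresh l₁ (I q') l₂ he _ hw (List.mem_map_of_mem (f := sel) hm)
  have hlevels : ∀ q q', q < q' → q' ≤ 3 → (I q).1 ≤ (I q').1 := by
    intro q q' h h'
    have hp := (pair q q' h h').map Prod.fst
    have hs := hsorted.sublist hp
    exact (List.pairwise_cons.mp hs).1 _ (by simp)
  have hdvdq : ∀ q q', q ≤ q' → q' ≤ 3 → u q ∣ u q' := by
    intro q q' h h'
    rcases eq_or_lt_of_le h with rfl | hlt
    · exact dvd_rfl
    · have hle := hlevels q q' hlt h'
      exact ⟨2 ^ ((I q').1 - (I q).1), by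
        show Δ * 2 ^ (I q').1 = Δ * 2 ^ (I q).1 * 2 ^ ((I q').1 - (I q).1)
        rw [mul_assoc, ← pow_add]
        congr 2
        omega⟩
  have hneI : ∀ q q', q < q' → q' ≤ 3 → I q ≠ I q' := by
    intro q q' h h'
    have := hnodup.sublist (pair q q' h h')
    simp at this
    exact this
  have hleveq : ∀ q q', u q = u q' → (I q).1 = (I q').1 := by
    intro q q' h
    have h2 : 2 ^ (I q).1 = 2 ^ (I q').1 := Nat.eq_of_mul_eq_mul_left (by omega) h
    exact Nat.pow_right_injective (by norm_num) h2
  have hneq : ∀ q q', q < q' → q' ≤ 3 → u q = u q' → a q = a q' → 0 < a q → False := by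
    intro q q' h h' huq haq hpos
    exact hneI q q' h h' (interval_eq_of_a Δ hΔ _ _ (hleveq q q' huq) haq hpos)
  have hnebq : ∀ q q', q < q' → q' ≤ 3 → u q = u q' → b q = b q' → b q < n → False := by
    intro q q' h h' huq hbq hlt
    exact hneI q q' h h' (interval_eq_of_b n Δ hΔ _ _ (hleveq q q' huq) hbq hlt)
  exact core4 n v u a b x hNBq hdvdq hvq hxq hfq hneq hnebq

/-! ### Small facts about `commitSet`, `baseTimes`, `firstBase`, `tplusN` -/

lemma mem_commitSet {R : List (ℕ × ℕ)} {cl : ℕ → List Ivl} {I : Ivl} {t : ℕ} :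
    (I, t) ∈ commitSet R cl ↔ I ∈ cl t ∧ t ≤ lastT R := by
  unfold commitSet
  simp only [Finset.mem_biUnion, Finset.mem_range, Finset.mem_image, List.mem_toFinset,
    Prod.mk.injEq]
  constructor
  · rintro ⟨τ, hτ, J, hJ, rfl, rfl⟩
    exact ⟨hJ, by omega⟩
  · rintro ⟨hI, ht⟩
    exact ⟨t, by omega, I, hI, rfl, rfl⟩

lemma mem_baseTimes {n Δ : ℕ} {R : List (ℕ × ℕ)} {serve : ℕ → ℕ × ℕ} {I : Ivl}
    {p : ℕ × ℕ} (hp : p ∈ triBaseAll n R serve) (hI : p.1 ∈ ivlNodes Δ I) :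
    p.2 ∈ baseTimes n Δ R serve I := by
  unfold baseTimes
  exact Finset.mem_image.mpr ⟨p, Finset.mem_filter.mpr ⟨hp, hI⟩, rfl⟩

lemma firstBase_le {n Δ : ℕ} {R : List (ℕ × ℕ)} {serve : ℕ → ℕ × ℕ} {I : Ivl} {τ : ℕ}
    (h : τ ∈ baseTimes n Δ R serve I) : firstBase n Δ R serve I ≤ τ := by
  have hle := Finset.min_le h
  unfold firstBase
  rcases hm : (baseTimes n Δ R serve I).min with _ | x
  · exact Nat.zero_le τ
  · rw [hm] at hle
    have hx : x ≤ τ := by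
      rw [show ((some x : WithTop ℕ)) = (x : WithTop ℕ) from rfl] at hle
      exact WithTop.coe_le_coe.mp hle
    exact hx

lemma tplusN_le {n Δ : ℕ} {R : List (ℕ × ℕ)} {serve : ℕ → ℕ × ℕ} {I : Ivl} {s τ : ℕ}
    (h : τ ∈ baseTimes n Δ R serve I) (hs : s < τ) : tplusN n Δ R serve I s ≤ τ := by
  classical
  have hmem : τ ∈ (baseTimes n Δ R serve I).filter fun τ' => s < τ' :=
    Finset.mem_filter.mpr ⟨h, hs⟩
  have hle : tplusE n Δ R serve I s ≤ (τ : WithTop ℕ) := Finset.min_le hmem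
  unfold tplusN
  rcases hm : tplusE n Δ R serve I s with _ | x
  · exact Nat.zero_le τ
  · rw [hm] at hle
    have hx : x ≤ τ := by
      rw [show ((some x : WithTop ℕ)) = (x : WithTop ℕ) from rfl] at hle
      exact WithTop.coe_le_coe.mp hle
    exact hx

/-! ### Each arc is charged at most three times -/

lemma arc_filter_card (n Δ k r0 : ℕ) (R : List (ℕ × ℕ)) (hΔ : 1 ≤ Δ)
    (e : LineonExec n Δ k r0 R) (a : GEdge) :
    ((lineBins n Δ R e.tri.serve e.commitList).filter fun b =>
        a ∈ arcbin n Δ R e.tri.serve e.commitList b).card ≤ 3 := by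
  classical
  set serve := e.tri.serve with hserve
  set cl := e.commitList with hcl
  set F := (lineBins n Δ R serve cl).filter
      (fun b => a ∈ arcbin n Δ R serve cl b) with hF
  rcases Finset.eq_empty_or_nonempty F with hFe | ⟨b₀, hb₀⟩
  · rw [hFe]; simp
  -- extract the shape of the arc
  have harc₀ : a ∈ arcbin n Δ R serve cl b₀ := (Finset.mem_filter.mp hb₀).2
  unfold arcbin at harc₀
  obtain ⟨haT, hsub₀, v, t, rfl, hct₀⟩ :
      a ∈ triAT R serve ∧ eVerts a ⊆ payer n Δ R serve cl b₀ ∧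
        ∃ v t, a = GEdge.a v t ∧ (b₀.1, t) ∈ commitSet R cl := by
    have := Finset.mem_filter.mp harc₀
    exact ⟨this.1, this.2.1, this.2.2⟩
  -- facts valid for every bin in the filter
  have hbfacts : ∀ b ∈ F, b.1 ∈ cl t ∧ v ∈ nbhdNodes n Δ b.1 ∧ b.2 ≤ t ∧
      t + 1 ≤ tplusN n Δ R serve b.1 b.2 := by
    intro b hb
    have harc : GEdge.a v t ∈ arcbin n Δ R serve cl b := (Finset.mem_filter.mp hb).2
    unfold arcbin at harc
    have harc' := Finset.mem_filter.mp harc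
    obtain ⟨hsub, v', t', heq, hct⟩ := harc'.2
    have hvv : t' = t := by
      injection heq with h1 h2; omega
    rw [hvv] at hct
    have hclb : b.1 ∈ cl t := (mem_commitSet.mp hct).1
    -- a base replica of b.1 not later than t
    obtain ⟨p, hp, hpI, hpt, -⟩ := e.commit_stay t b.1 hclb
    have hbt : p.2 ∈ baseTimes n Δ R serve b.1 := mem_baseTimes hp hpI
    -- the bin is not a last bin
    have hnotlast : ¬ isLastBin n Δ R serve cl b := by
      intro hlast
      have hmem : (v, t + 1) ∈ payer n Δ R serve cl b := hsub (by simp [eVerts])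
      unfold payer at hmem
      rw [if_pos hlast, Finset.mem_product, Finset.mem_Icc] at hmem
      have h1 : t + 1 ≤ firstBase n Δ R serve b.1 := hmem.2.2
      have h2 := firstBase_le hbt
      omega
    have hm1 : (v, t) ∈ payer n Δ R serve cl b := hsub (by simp [eVerts])
    have hm2 : (v, t + 1) ∈ payer n Δ R serve cl b := hsub (by simp [eVerts])
    unfold payer at hm1 hm2
    rw [if_neg hnotlast, Finset.mem_product, Finset.mem_Icc] at hm1 hm2
    exact ⟨hclb, hm1.1, hm1.2.1, hm2.2.2⟩
  -- at most one bin per interval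
  have key : ∀ b ∈ F, ∀ b' ∈ F, b.1 = b'.1 → b.2 < b'.2 → False := by
    intro b hb b' hb' hfst hlt
    have hbl' : b' ∈ lineBins n Δ R serve cl := (Finset.mem_filter.mp hb').1
    unfold lineBins at hbl'
    obtain ⟨p, hpmem, hpe⟩ := Finset.mem_image.mp hbl'
    have hb'2 : b'.2 = tminus n Δ R serve b'.1 p.2 := by
      rw [← hpe]
    -- b'.2 is a base time of b'.1
    have hb'2' : b'.2 = ((baseTimes n Δ R serve b'.1).filter fun τ => τ < p.2).sup id := by
      rw [hb'2]; rfl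
    have hb'base : b'.2 ∈ baseTimes n Δ R serve b'.1 := by
      rcases Finset.eq_empty_or_nonempty
          ((baseTimes n Δ R serve b'.1).filter fun τ => τ < p.2) with hXe | hXn
      · exfalso
        rw [hXe, Finset.sup_empty] at hb'2'
        simp at hb'2'
        omega
      · obtain ⟨τ₀, hτ₀, he⟩ := Finset.exists_mem_eq_sup _ hXn id
        rw [he] at hb'2'
        have hτ := (Finset.mem_filter.mp hτ₀).1
        rw [hb'2']
        simpa using hτ
    have h1 := (hbfacts b hb).2.2.2
    have h2 := (hbfacts b' hb').2.2.1
    have h3 : tplusN n Δ R serve b.1 b.2 ≤ b'.2 := by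
      rw [hfst]
      exact tplusN_le hb'base (by omega)
    omega
  have hinj : Set.InjOn Prod.fst (F : Set (Ivl × ℕ)) := by
    intro b hb b' hb' hfst
    have hb₁ : b ∈ F := Finset.mem_coe.mp hb
    have hb₁' : b' ∈ F := Finset.mem_coe.mp hb'
    rcases lt_trichotomy b.2 b'.2 with h | h | h
    · exact (key b hb₁ b' hb₁' hfst h).elim
    · exact Prod.ext hfst h
    · exact (key b' hb₁' b hb₁ hfst.symm h).elim
  -- map to intervals committed at time t containing v in their neighborhood
  set S := ((cl t).filter (fun I => decide (v ∈ nbhdNodes n Δ I))).toFinset with hS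
  have himg : F.image Prod.fst ⊆ S := by
    intro I hI
    obtain ⟨b, hbF, rfl⟩ := Finset.mem_image.mp hI
    have h := hbfacts b hbF
    rw [hS, List.mem_toFinset, List.mem_filter]
    exact ⟨h.1, by simpa using h.2.1⟩
  have hcard1 : F.card = (F.image Prod.fst).card := (Finset.card_image_of_injOn hinj).symm
  have hcard2 : (F.image Prod.fst).card ≤ S.card := Finset.card_le_card himg
  have hcard3 : S.card ≤ ((cl t).filter (fun I => decide (v ∈ nbhdNodes n Δ I))).length :=
    ((cl t).filter _).toFinset_card_le
  have hcard4 : ((cl t).filter (fun I => decide (v ∈ nbhdNodes n Δ I))).length ≤ 3 := by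
    refine commit_count_le_three n Δ k hΔ e.hn (cl t) (e.sel t)
      (e.commit_valid t) (e.commit_nodup t) (e.commit_sorted t) ?_ (e.sel_nbhd t) v _
      List.filter_sublist ?_
    · intro l₁ I l₂ he w hw
      exact (e.commit_fresh t l₁ I l₂ he w hw).2
    · intro I hI
      have := (List.mem_filter.mp hI).2
      simpa using this
  omega

theorem lineon_arc_charged_at_most_three_times' (n Δ k r0 : ℕ) (R : List (ℕ × ℕ))
    (hV : ValidInstance n r0 R) (hΔ : 1 ≤ Δ) (e : LineonExec n Δ k r0 R) :
    (∀ a ∈ triAT R e.tri.serve,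
        ((lineBins n Δ R e.tri.serve e.commitList).filter fun b =>
            a ∈ arcbin n Δ R e.tri.serve e.commitList b).card ≤ 3) ∧
      ∑ b ∈ lineBins n Δ R e.tri.serve e.commitList,
          (arcbin n Δ R e.tri.serve e.commitList b).card ≤
        3 * (triAT R e.tri.serve).card := by
  classical
  have part1 : ∀ a,
      ((lineBins n Δ R e.tri.serve e.commitList).filter fun b =>
          a ∈ arcbin n Δ R e.tri.serve e.commitList b).card ≤ 3 :=
    fun a => arc_filter_card n Δ k r0 R hΔ e a
  refine ⟨fun a _ => part1 a, ?_⟩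
  have h1 : ∀ b ∈ lineBins n Δ R e.tri.serve e.commitList,
      (arcbin n Δ R e.tri.serve e.commitList b).card =
        ∑ a ∈ triAT R e.tri.serve,
          if a ∈ arcbin n Δ R e.tri.serve e.commitList b then 1 else 0 := by
    intro b _
    rw [Finset.sum_ite_mem]
    rw [Finset.inter_eq_right.mpr]
    · simp
    · intro x hx
      unfold arcbin at hx
      exact (Finset.mem_filter.mp hx).1
  calc ∑ b ∈ lineBins n Δ R e.tri.serve e.commitList,
        (arcbin n Δ R e.tri.serve e.commitList b).card
      = ∑ b ∈ lineBins n Δ R e.tri.serve e.commitList, ∑ a ∈ triAT R e.tri.serve,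
          if a ∈ arcbin n Δ R e.tri.serve e.commitList b then 1 else 0 :=
        Finset.sum_congr rfl h1
    _ = ∑ a ∈ triAT R e.tri.serve, ∑ b ∈ lineBins n Δ R e.tri.serve e.commitList,
          if a ∈ arcbin n Δ R e.tri.serve e.commitList b then 1 else 0 :=
        Finset.sum_comm
    _ ≤ ∑ _a ∈ triAT R e.tri.serve, 3 := by
        refine Finset.sum_le_sum ?_
        intro a _
        have := part1 a
        rw [Finset.card_filter] at this
        convert this using 2
    _ = 3 * (triAT R e.tri.serve).card := by
        rw [Finset.sum_const, smul_eq_mul, mul_comm]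
/-- Every arc of Triangle's solution belongs to `arcbin(I,i)` for
at most 3 bins `(I,i) ∈ BIN`; consequently `Σ_{b ∈ BIN} |arcbin(b)| ≤ 3·|A^T|`. -/
theorem lineon_arc_charged_at_most_three_times (n Δ k r0 : ℕ) (R : List (ℕ × ℕ))
    (hV : ValidInstance n r0 R) (hΔ : 1 ≤ Δ) (e : LineonExec n Δ k r0 R) :
    (∀ a ∈ triAT R e.tri.serve,
        ((lineBins n Δ R e.tri.serve e.commitList).filter fun b =>
            a ∈ arcbin n Δ R e.tri.serve e.commitList b).card ≤ 3) ∧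
      ∑ b ∈ lineBins n Δ R e.tri.serve e.commitList,
          (arcbin n Δ R e.tri.serve e.commitList b).card ≤
        3 * (triAT R e.tri.serve).card := by
  exact lineon_arc_charged_at_most_three_times' n Δ k r0 R hV hΔ e
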